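/- arXiv:1802.06539 — 4 statements merged into one kernel-verified Lean document; each statement's English description precedes it below -/
import Mathlib

section
/- Let f ∈ ℤ[x] be a monic irreducible polynomial of degree 2k with k > 1 which has exactly 2k−2 roots on the unit circle. Then the two roots of f of modulus different from 1 are real, and they are of the form r and 1/r for some real r. -/
/-!
A root `w` of `f` on the unit circle has `w⁻¹ = conj w` as another root. By Gauss's lemma `f` is
irreducible over `ℚ`, hence the minimal polynomial of `w` up to a unit, so it divides its reverse,
which vanishes at `w`: the roots of `f` are closed under `z ↦ z⁻¹`. As `f` is real, they are also
closed under `z ↦ conj z`, and `0` is not among them. If `α` is one of the two roots off the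
circle, then `|α| ≠ 1` rules out `α⁻¹ = α` and `conj α = α⁻¹`, so the other one is `α⁻¹` and
`conj α = α`.
-/

open Polynomial ComplexConjugate

theorem norm_eq_one_of_norm_inv_eq {𝕜 : Type*} [NormedDivisionRing 𝕜] {z : 𝕜} (hz : z ≠ 0)
    (h : ‖z⁻¹‖ = ‖z‖) : ‖z‖ = 1 := by
  rw [norm_inv] at h
  have hsq : ‖z‖ * ‖z‖ = 1 := by
    nth_rewrite 1 [← h]
    exact inv_mul_cancel₀ (norm_ne_zero_iff.mpr hz)
  exact (mul_self_eq_one_iff.mp hsq).resolve_right (by linarith [norm_nonneg z])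

theorem Irreducible.coeff_zero_ne_zero {R : Type*} [CommRing R] [IsDomain R] {p : R[X]}
    (hp : Irreducible p) (hdeg : p.natDegree ≠ 1) : p.coeff 0 ≠ 0 := fun h0 ↦
  hdeg <| by
    rw [← natDegree_eq_of_degree_eq
      (degree_eq_degree_of_associated (irreducible_X.associated_of_dvd hp (X_dvd_iff.mpr h0))),
      natDegree_X]

namespace Polynomial

variable {R L : Type*} [CommSemiring R] [Field L] [Algebra R L]

theorem aeval_reverse_eq_zero_iff (p : R[X]) {z : L} (hz : z ≠ 0) :
    aeval z p.reverse = 0 ↔ aeval z⁻¹ p = 0 := by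
  have : Invertible z⁻¹ := invertibleOfNonzero (inv_ne_zero hz)
  simpa only [aeval_def, invOf_eq_inv, inv_inv] using
    eval₂_reverse_eq_zero_iff (algebraMap R L) z⁻¹ p

theorem aeval_inv_eq_zero_of_dvd_reverse {p : R[X]} (hp : p ∣ p.reverse) {z : L} (hz : z ≠ 0)
    (h : aeval z p = 0) : aeval z⁻¹ p = 0 := by
  obtain ⟨q, hq⟩ := hp
  rw [← aeval_reverse_eq_zero_iff p hz, hq, map_mul, h, zero_mul]

theorem dvd_reverse_of_aeval_inv_eq_zero {K : Type*} [Field K] [Algebra K L] {p : K[X]}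
    (hp : Irreducible p) {x : L} (hx : x ≠ 0) (h : aeval x p = 0) (hinv : aeval x⁻¹ p = 0) :
    p ∣ p.reverse :=
  (Dvd.intro _ (minpoly.eq_of_irreducible hp h)).trans
    (minpoly.dvd K x ((aeval_reverse_eq_zero_iff p hx).mpr hinv))

theorem aeval_inv_eq_zero_of_irreducible_of_isPrimitive [CharZero L] {f : ℤ[X]}
    (hf : Irreducible f) (hprim : f.IsPrimitive) {x : L} (hx : x ≠ 0) (h : aeval x f = 0)
    (hinv : aeval x⁻¹ f = 0) {z : L} (hz : z ≠ 0) (hz' : aeval z f = 0) : aeval z⁻¹ f = 0 := by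
  have hg : Irreducible (f.map (algebraMap ℤ ℚ)) :=
    (IsPrimitive.Int.irreducible_iff_irreducible_map_cast hprim).mp hf
  have hroot (y : L) : aeval y (f.map (algebraMap ℤ ℚ)) = aeval y f := aeval_map_algebraMap ℚ y f
  rw [← hroot] at h hinv hz' ⊢
  exact aeval_inv_eq_zero_of_dvd_reverse (dvd_reverse_of_aeval_inv_eq_zero hg hx h hinv) hz hz'

theorem conj_mem_aroots {R : Type*} [CommRing R] [Algebra R ℝ] [Algebra R ℂ]
    [IsScalarTower R ℝ ℂ] {p : R[X]} {z : ℂ} (hz : z ∈ p.aroots ℂ) : conj z ∈ p.aroots ℂ := by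
  rw [mem_aroots'] at hz ⊢
  refine ⟨hz.1, ?_⟩
  rw [← aeval_map_algebraMap ℝ, aeval_conj, aeval_map_algebraMap, hz.2, map_zero]

end Polynomial

theorem Complex.exists_filter_norm_ne_one_eq_pair {s : Multiset ℂ} (h0 : 0 ∉ s)
    (hconj : ∀ z ∈ s, conj z ∈ s) (hinv : ∀ z ∈ s, z⁻¹ ∈ s)
    (hcard : (s.filter fun z ↦ ‖z‖ ≠ 1).card = 2) :
    ∃ r : ℝ, r ≠ 0 ∧ s.filter (fun z ↦ ‖z‖ ≠ 1) = {(r : ℂ), (r : ℂ)⁻¹} := by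
  obtain ⟨α, β, hαβ⟩ := Multiset.card_eq_two.mp hcard
  have mem_pair {z : ℂ} (hz : z ∈ s) (hz1 : ‖z‖ ≠ 1) : z = α ∨ z = β := by
    have : z ∈ s.filter (fun z ↦ ‖z‖ ≠ 1) := Multiset.mem_filter.mpr ⟨hz, hz1⟩
    simpa [hαβ] using this
  have hα : α ∈ s.filter (fun z ↦ ‖z‖ ≠ 1) := by simp [hαβ]
  obtain ⟨hαs, hα1⟩ := Multiset.mem_filter.mp hα
  have hα0 : α ≠ 0 := ne_of_mem_of_not_mem hαs h0
  have hβ : β = α⁻¹ := by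
    rcases mem_pair (hinv α hαs) (by rwa [norm_inv, Ne, inv_eq_one]) with h | h
    · exact absurd (norm_eq_one_of_norm_inv_eq hα0 (by rw [h])) hα1
    · exact h.symm
  have hreal : conj α = α := by
    rcases mem_pair (hconj α hαs) (by rwa [Complex.norm_conj]) with h | h
    · exact h
    · exact absurd (norm_eq_one_of_norm_inv_eq hα0 (by rw [← hβ, ← h, Complex.norm_conj])) hα1
  obtain ⟨r, rfl⟩ := Complex.conj_eq_iff_real.mp hreal
  exact ⟨r, by simpa using hα0, by rw [hαβ, hβ]⟩

theorem roots_off_circle_real_reciprocal_general (f : Polynomial ℤ) (k : ℕ) (hk : 1 < k)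
    (hirr : Irreducible f) (hdeg : f.natDegree = 2 * k)
    (hcirc : (Multiset.filter (fun z => ‖z‖ = 1)
        ((f.map (Int.castRingHom ℂ)).roots)).card = 2 * k - 2) :
    ∃ r : ℝ, r ≠ 0 ∧
      Multiset.filter (fun z => ‖z‖ ≠ 1) ((f.map (Int.castRingHom ℂ)).roots) =
        {((r : ℂ)), ((r : ℂ)⁻¹)} := by
  rw [← algebraMap_int_eq, ← aroots_def] at hcirc ⊢
  have hroot (z : ℂ) : z ∈ f.aroots ℂ ↔ aeval z f = 0 :=
    mem_aroots.trans (and_iff_right hirr.ne_zero)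
  have h0 : 0 ∉ f.aroots ℂ := by
    rw [hroot, ← coeff_zero_eq_aeval_zero', algebraMap_int_eq, eq_intCast, Int.cast_eq_zero]
    exact hirr.coeff_zero_ne_zero (by omega)
  obtain ⟨w, hw⟩ := Multiset.card_pos_iff_exists_mem.mp (show 0 < _ by rw [hcirc]; omega)
  obtain ⟨hw, hw1⟩ := Multiset.mem_filter.mp hw
  have hinv (z : ℂ) (hz : z ∈ f.aroots ℂ) : z⁻¹ ∈ f.aroots ℂ := by
    have hwinv := conj_mem_aroots hw
    rw [← Complex.inv_eq_conj hw1] at hwinv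
    have hw0 := ne_of_mem_of_not_mem hw h0
    have hz0 := ne_of_mem_of_not_mem hz h0
    rw [hroot] at hz hw hwinv ⊢
    exact aeval_inv_eq_zero_of_irreducible_of_isPrimitive hirr (hirr.isPrimitive (by omega))
      hw0 hw hwinv hz0 hz
  refine Complex.exists_filter_norm_ne_one_eq_pair h0 (fun _ ↦ conj_mem_aroots) hinv ?_
  have hsplit := Multiset.card_add (Multiset.filter (fun z => ‖z‖ = 1) (f.aroots ℂ))
    (Multiset.filter (fun z => ‖z‖ ≠ 1) (f.aroots ℂ))
  rw [Multiset.filter_add_not, IsAlgClosed.card_aroots_eq_natDegree, hdeg, hcirc] at hsplit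
  omega

/-- If `f ∈ ℤ[x]` is monic irreducible of degree `2k`, `k > 1`, with exactly `2k-2`
roots on the unit circle (with multiplicity), then its two roots of modulus `≠ 1`
are real, of the form `r` and `1/r`. -/
theorem roots_off_circle_real_reciprocal (f : Polynomial ℤ) (k : ℕ) (hk : 1 < k)
    (hmonic : f.Monic) (hirr : Irreducible f) (hdeg : f.natDegree = 2 * k)
    (hcirc : (Multiset.filter (fun z => ‖z‖ = 1)
        ((f.map (Int.castRingHom ℂ)).roots)).card = 2 * k - 2) :
    ∃ r : ℝ, r ≠ 0 ∧
      Multiset.filter (fun z => ‖z‖ ≠ 1) ((f.map (Int.castRingHom ℂ)).roots) =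
        {((r : ℂ)), ((r : ℂ)⁻¹)} :=
  roots_off_circle_real_reciprocal_general f k hk hirr hdeg hcirc
end

section
/- Let f ∈ ℤ[x] be a monic polynomial all of whose complex roots are nonzero and have modulus at most 1. Then every root of f is a root of unity. -/
/-!
Every conjugate of a root `z` of `f` is again a root of `f`, so `z` is a nonzero algebraic integer
whose conjugates all lie in the closed unit disc. In the number field `ℚ(z)` the powers of `z` are
then algebraic integers with uniformly bounded conjugates, hence finitely many, so two of them
coincide (`NumberField.Embeddings.pow_eq_one_of_norm_le_one`).
-/

open Polynomial IntermediateField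

theorem aeval_eq_zero_of_mem_rootSet_minpoly {A : Type*} [Field A] [Algebra ℚ A] {f : ℤ[X]}
    {z w : A} (hf : aeval z f = 0) (hw : w ∈ (minpoly ℚ z).rootSet A) : aeval w f = 0 := by
  obtain ⟨g, hg⟩ : minpoly ℚ z ∣ f.map (algebraMap ℤ ℚ) :=
    minpoly.dvd ℚ z (by rwa [aeval_map_algebraMap])
  rw [← aeval_map_algebraMap ℚ, hg, aeval_mul, (mem_rootSet.mp hw).2, zero_mul]

theorem IsIntegral.exists_pow_eq_one_of_norm_rootSet_minpoly_le_one {z : ℂ}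
    (hz : IsIntegral ℤ z) (hz0 : z ≠ 0) (h : ∀ w ∈ (minpoly ℚ z).rootSet ℂ, ‖w‖ ≤ 1) :
    ∃ n, 0 < n ∧ z ^ n = 1 := by
  have : FiniteDimensional ℚ ℚ⟮z⟯ := adjoin.finiteDimensional (hz.tower_top (A := ℚ))
  have : NumberField ℚ⟮z⟯ := ⟨⟩
  set x : ℚ⟮z⟯ := AdjoinSimple.gen ℚ z
  have hxz : algebraMap ℚ⟮z⟯ ℂ x = z := rfl
  have hxi : IsIntegral ℤ x := by
    rwa [← isIntegral_algebraMap_iff (algebraMap ℚ⟮z⟯ ℂ).injective, hxz]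
  have hmin : minpoly ℚ x = minpoly ℚ z := by
    rw [← minpoly.algebraMap_eq (algebraMap ℚ⟮z⟯ ℂ).injective, hxz]
  have hconj : ∀ φ : ℚ⟮z⟯ →+* ℂ, ‖φ x‖ ≤ 1 := fun φ ↦ h _ <| by
    rw [← hmin, ← NumberField.Embeddings.range_eval_eq_rootSet_minpoly]
    exact ⟨φ, rfl⟩
  obtain ⟨n, hn, hxn⟩ := NumberField.Embeddings.pow_eq_one_of_norm_le_one ℚ⟮z⟯ ℂ
    (fun hx ↦ hz0 (by rw [← hxz, hx, map_zero])) hxi hconj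
  exact ⟨n, hn, by rw [← hxz, ← map_pow, hxn, map_one]⟩

/-- Kronecker's theorem: if `f ∈ ℤ[x]` is monic and all its complex roots are nonzero
of modulus at most 1, then every root of `f` is a root of unity. -/
theorem kronecker_roots_of_unity (f : Polynomial ℤ) (hmonic : f.Monic)
    (hroots : ∀ z ∈ (f.map (Int.castRingHom ℂ)).roots, 0 < ‖z‖ ∧ ‖z‖ ≤ 1) :
    ∀ z ∈ (f.map (Int.castRingHom ℂ)).roots, ∃ n : ℕ, 1 ≤ n ∧ z ^ n = 1 := by
  change ∀ z ∈ f.aroots ℂ, _ at hroots ⊢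
  intro z hz
  have hfz : aeval z f = 0 := (mem_aroots.mp hz).2
  refine IsIntegral.exists_pow_eq_one_of_norm_rootSet_minpoly_le_one ⟨f, hmonic, hfz⟩
    (norm_pos_iff.mp (hroots z hz).1) fun w hw ↦ (hroots w ?_).2
  exact mem_aroots.mpr ⟨hmonic.ne_zero, aeval_eq_zero_of_mem_rootSet_minpoly hfz hw⟩
end

section
/- The roots of modulus > 1 of the polynomials x² − a x + 1, as a ranges over integers a ≥ 3, form a set T₂ = { (a + √(a²−4))/2 : a ∈ ℤ, a ≥ 3 }, and the set ⋃_{r ∈ T₂} (2π/ln r)·(ℤ \ {0})^q is dense in ℝ^q. -/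
open Real

/-- The set of roots of modulus `> 1` of the polynomials `x² - a x + 1`, `a ∈ ℤ`, `a ≥ 3`. -/
def T₂ : Set ℝ := {r : ℝ | ∃ a : ℤ, 3 ≤ a ∧ r = ((a : ℝ) + Real.sqrt ((a : ℝ) ^ 2 - 4)) / 2}

set_option maxHeartbeats 1000000 in
/-- The roots of modulus `> 1` of `x² - ax + 1`, `a ∈ ℤ`, `a ≥ 3`, form the set `T₂`, and
the union over `r ∈ T₂` of `(2π / ln r)·(ℤ \ {0})^q` is dense in `ℝ^q`. -/
theorem T2_and_density (q : ℕ) (hq : 1 ≤ q) :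
    ({r : ℝ | 1 < |r| ∧ ∃ a : ℤ, 3 ≤ a ∧ r ^ 2 - (a : ℝ) * r + 1 = 0} = T₂) ∧
    Dense (⋃ r ∈ T₂,
      {v : Fin q → ℝ | ∀ i, ∃ n : ℤ, n ≠ 0 ∧ v i = (2 * π / Real.log r) * (n : ℝ)}) := by
  constructor
  · ext r
    simp only [Set.mem_setOf_eq, T₂]
    constructor
    · rintro ⟨hr, a, ha, heq⟩
      have ha' : (3:ℝ) ≤ (a:ℝ) := by exact_mod_cast ha
      have hs4 : (0:ℝ) ≤ (a:ℝ)^2 - 4 := by nlinarith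
      have hs2 : (Real.sqrt ((a:ℝ)^2 - 4))^2 = (a:ℝ)^2 - 4 := Real.sq_sqrt hs4
      have hs0 : 0 ≤ Real.sqrt ((a:ℝ)^2 - 4) := Real.sqrt_nonneg _
      set s := Real.sqrt ((a:ℝ)^2 - 4) with hs
      refine ⟨a, ha, ?_⟩
      have hfact : (r - ((a:ℝ)+s)/2) * (r - ((a:ℝ)-s)/2) = 0 := by nlinarith
      rcases mul_eq_zero.1 hfact with h | h
      · linarith [sub_eq_zero.1 h]
      · exfalso
        have hr' : r = ((a:ℝ)-s)/2 := by linarith [sub_eq_zero.1 h]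
        have h1 : (a:ℝ) - 2 ≤ s := by nlinarith
        have h2 : s < (a:ℝ) := by nlinarith
        have : |r| ≤ 1 := by
          rw [hr', abs_le]; constructor <;> nlinarith
        linarith
    · rintro ⟨a, ha, hr⟩
      have ha' : (3:ℝ) ≤ (a:ℝ) := by exact_mod_cast ha
      have hs4 : (0:ℝ) ≤ (a:ℝ)^2 - 4 := by nlinarith
      have hs2 : (Real.sqrt ((a:ℝ)^2-4))^2 = (a:ℝ)^2 - 4 := Real.sq_sqrt hs4
      have hs0 : 0 ≤ Real.sqrt ((a:ℝ)^2-4) := Real.sqrt_nonneg _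
      have hr1 : 1 < r := by rw [hr]; nlinarith
      refine ⟨by rw [abs_of_pos (by linarith)]; exact hr1, a, ha, ?_⟩
      rw [hr]; nlinarith
  · rw [Metric.dense_iff]
    intro x ε hε
    have hπ : 0 < π := Real.pi_pos
    set K := Real.exp (4 * π / ε) with hK
    have hKpos : 0 < K := Real.exp_pos _
    obtain ⟨a, ha3, haK⟩ : ∃ a : ℤ, 3 ≤ a ∧ 2 * K ≤ (a:ℝ) := by
      refine ⟨max 3 ⌈2*K⌉, le_max_left _ _, le_trans (Int.le_ceil _) ?_⟩
      exact_mod_cast le_max_right 3 ⌈2*K⌉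
    have ha' : (3:ℝ) ≤ (a:ℝ) := by exact_mod_cast ha3
    have hs0 : 0 ≤ Real.sqrt ((a:ℝ)^2-4) := Real.sqrt_nonneg _
    set r := ((a:ℝ) + Real.sqrt ((a:ℝ)^2-4))/2 with hrdef
    have hrK : K ≤ r := by rw [hrdef]; linarith
    have hK1 : (1:ℝ) < K := by
      rw [hK]
      have h4 : (0:ℝ) < 4*π/ε := by positivity
      calc (1:ℝ) = Real.exp 0 := Real.exp_zero.symm
        _ < _ := Real.exp_lt_exp.2 h4
    have hr1 : 1 < r := lt_of_lt_of_le hK1 hrK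
    have hlogK : Real.log K = 4*π/ε := Real.log_exp _
    have hlogr : 4*π/ε ≤ Real.log r := hlogK ▸ Real.log_le_log hKpos hrK
    have hlogpos : 0 < Real.log r := lt_of_lt_of_le (by positivity) hlogr
    set c := 2 * π / Real.log r with hc
    clear_value r
    have hcpos : 0 < c := by rw [hc]; positivity
    have hc0 : c ≠ 0 := ne_of_gt hcpos
    clear_value c
    have hcε : c ≤ ε / 2 := by
      rw [hc, div_le_iff₀ hlogpos]
      have hkey : (4*π/ε) * (ε/2) = 2*π := by field_simp; ring
      nlinarith
    set N : Fin q → ℤ := fun i => if round (x i / c) = 0 then 1 else round (x i / c) with hN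
    clear_value N
    refine ⟨fun i => c * N i, ?_, ?_⟩
    · rw [Metric.mem_ball, dist_pi_lt_iff hε]
      intro i
      rw [Real.dist_eq]
      have hround := abs_sub_round (x i / c)
      have hxi : x i = c * (x i / c) := by field_simp
      by_cases h0 : round (x i / c) = 0
      · have hNi : N i = 1 := by rw [hN]; exact if_pos h0
        have habs : |x i / c| ≤ 1/2 := by
          rwa [h0, Int.cast_zero, sub_zero] at hround
        have hx : |x i| ≤ c/2 := by
          rw [hxi, abs_mul, abs_of_pos hcpos]; nlinarith [abs_nonneg (x i / c)]
        have hxb := abs_le.1 hx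
        rw [hNi]
        push_cast
        rw [abs_lt]
        constructor
        · nlinarith [hxb.1]
        · nlinarith [hxb.2]
      · have hNi : N i = round (x i / c) := by rw [hN]; exact if_neg h0
        rw [hNi]
        have heq : x i - c * (round (x i / c) : ℝ) = c * (x i / c - round (x i / c)) := by
          field_simp
        rw [abs_sub_comm, heq, abs_mul, abs_of_pos hcpos]
        nlinarith
    · refine Set.mem_biUnion ⟨a, ha3, hrdef⟩ ?_
      intro i
      refine ⟨N i, ?_, by rw [hc]⟩
      by_cases h0 : round (x i / c) = 0
      · have hNi : N i = 1 := by rw [hN]; exact if_pos h0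
        rw [hNi]; exact one_ne_zero
      · have hNi : N i = round (x i / c) := by rw [hN]; exact if_neg h0
        rw [hNi]; exact h0
end

section
/- Assume the four exponentials conjecture. If r₁, r₂ > 1 are real algebraic numbers with ln r₁ / ln r₂ irrational, and s₁, s₂ are real numbers with e^{i s₁}, e^{i s₂} algebraic, e^{i s₂} not a root of unity, then q₁ π / ln r₁ ≠ |s₂ + q₂ π| / ln r₂ for all nonzero rationals q₁ and all rationals q₂. -/
open Complex

/-- The four exponentials conjecture: if `x₁, x₂` are `ℚ`-linearly independent complex
numbers and `y₁, y₂` are `ℚ`-linearly independent complex numbers, then at least one of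
the numbers `e^{x_i y_j}` is transcendental. -/
def FourExponentialsConjecture : Prop :=
  ∀ x y : Fin 2 → ℂ, LinearIndependent ℚ x → LinearIndependent ℚ y →
    ∃ i j : Fin 2, Transcendental ℚ (Complex.exp (x i * y j))

/-!
If `q₁π / ln r₁ = |t| / ln r₂` with `t = s₂ + q₂π`, then the numbers `iq₁π, ln r₁, i|t|, ln r₂`
form the matrix `(x_i y_j)` for `x = (1, ln r₂ / ln r₁)` and `y = (iq₁π, ln r₁)`. Both pairs are
`ℚ`-linearly independent, while all four exponentials `e^{iq₁π}, r₁, e^{±is₂}e^{±iq₂π}, r₂` are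
algebraic, contradicting the four exponentials conjecture.
-/

theorem isAlgebraic_exp_rat_mul_pi_mul_I (q : ℚ) :
    IsAlgebraic ℚ (exp (q * Real.pi * I)) := by
  have hpow : exp (q * Real.pi * I) ^ (2 * q.den) = 1 := by
    have hnum : ((q.den : ℚ) * q : ℂ) = q.num := by exact_mod_cast Rat.den_mul_eq_num q
    rw [← exp_nat_mul, ← exp_int_mul_two_pi_mul_I q.num, ← hnum]
    push_cast
    ring_nf
  exact IsAlgebraic.of_pow (by positivity) (hpow ▸ isAlgebraic_one)

theorem isAlgebraic_exp_abs_mul_I {t : ℝ} (ht : IsAlgebraic ℚ (exp (t * I))) :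
    IsAlgebraic ℚ (exp (|t| * I)) := by
  rcases abs_choice t with h | h <;> rw [h]
  · exact ht
  · simpa [neg_mul, exp_neg] using ht.inv

theorem isAlgebraic_exp_log {r : ℝ} (hr : 0 < r) (halg : IsAlgebraic ℚ r) :
    IsAlgebraic ℚ (exp (Real.log r)) := by
  rw [← ofReal_exp, Real.exp_log hr]
  exact halg.algebraMap

theorem linearIndependent_one_ofReal {c : ℝ} (hc : Irrational c) :
    LinearIndependent ℚ ![(1 : ℂ), c] := by
  refine (LinearIndependent.pair_iff' one_ne_zero).2 fun a ha => hc ⟨a, ?_⟩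
  exact_mod_cast (Rat.smul_one_eq_cast ℂ a).symm.trans ha

theorem linearIndependent_mul_I_ofReal {a b : ℝ} (ha : a ≠ 0) (hb : b ≠ 0) :
    LinearIndependent ℚ ![(a : ℂ) * I, b] := by
  refine (LinearIndependent.pair_iff' (by simpa using ha)).2 fun q hq => hb ?_
  simpa [Rat.smul_def] using (congrArg re hq).symm

theorem four_exp_separates_general (h4e : FourExponentialsConjecture)
    (r₁ r₂ : ℝ) (hr₁ : 1 < r₁) (hr₂ : 1 < r₂)
    (halg₁ : IsAlgebraic ℚ r₁) (halg₂ : IsAlgebraic ℚ r₂)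
    (hirr : Irrational (Real.log r₁ / Real.log r₂))
    (s₂ : ℝ)
    (hs₂ : IsAlgebraic ℚ (Complex.exp (s₂ * Complex.I))) :
    ∀ q₁ q₂ : ℚ, q₁ ≠ 0 →
      (q₁ : ℝ) * Real.pi / Real.log r₁ ≠ |s₂ + (q₂ : ℝ) * Real.pi| / Real.log r₂ := by
  intro q₁ q₂ hq₁ heq
  have hL₁ : 0 < Real.log r₁ := Real.log_pos hr₁
  have hL₂ : 0 < Real.log r₂ := Real.log_pos hr₂
  set c := Real.log r₂ / Real.log r₁
  have hc : Irrational c := by simpa only [inv_div] using hirr.inv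
  have hc_mul : c * (q₁ * Real.pi) = |s₂ + q₂ * Real.pi| := by
    rw [div_eq_div_iff hL₁.ne' hL₂.ne'] at heq
    rw [div_mul_eq_mul_div, div_eq_iff hL₁.ne']
    linarith
  have hsum : IsAlgebraic ℚ (exp ((s₂ + q₂ * Real.pi : ℝ) * I)) := by
    push_cast
    rw [add_mul, exp_add]
    exact hs₂.mul (isAlgebraic_exp_rat_mul_pi_mul_I q₂)
  obtain ⟨i, j, htr⟩ := h4e ![1, c] ![(q₁ * Real.pi : ℝ) * I, Real.log r₁]
    (linearIndependent_one_ofReal hc)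
    (linearIndependent_mul_I_ofReal (by simp [hq₁, Real.pi_ne_zero]) hL₁.ne')
  apply htr
  fin_cases i <;> fin_cases j <;> simp only [Fin.zero_eta, Fin.mk_one, Matrix.cons_val_zero,
    Matrix.cons_val_one, one_mul]
  · exact_mod_cast isAlgebraic_exp_rat_mul_pi_mul_I q₁
  · exact isAlgebraic_exp_log (by linarith) halg₁
  · rw [← mul_assoc, ← ofReal_mul, hc_mul]
    exact isAlgebraic_exp_abs_mul_I hsum
  · rw [← ofReal_mul, div_mul_cancel₀ _ hL₁.ne']
    exact isAlgebraic_exp_log (by linarith) halg₂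

/-- Assuming the four exponentials conjecture: if `r₁, r₂ > 1` are real algebraic
numbers with `ln r₁ / ln r₂` irrational, and `s₁, s₂` are reals with `e^{is₁}, e^{is₂}`
algebraic and `e^{is₂}` not a root of unity, then `q₁π/ln r₁ ≠ |s₂ + q₂π|/ln r₂` for
all rationals `q₁ ≠ 0` and `q₂`. -/
theorem four_exp_separates (h4e : FourExponentialsConjecture)
    (r₁ r₂ : ℝ) (hr₁ : 1 < r₁) (hr₂ : 1 < r₂)
    (halg₁ : IsAlgebraic ℚ r₁) (halg₂ : IsAlgebraic ℚ r₂)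
    (hirr : Irrational (Real.log r₁ / Real.log r₂))
    (s₁ s₂ : ℝ) (hs₁ : IsAlgebraic ℚ (Complex.exp (s₁ * Complex.I)))
    (hs₂ : IsAlgebraic ℚ (Complex.exp (s₂ * Complex.I)))
    (hnru : ¬∃ n : ℕ, 0 < n ∧ (Complex.exp (s₂ * Complex.I)) ^ n = 1) :
    ∀ q₁ q₂ : ℚ, q₁ ≠ 0 →
      (q₁ : ℝ) * Real.pi / Real.log r₁ ≠ |s₂ + (q₂ : ℝ) * Real.pi| / Real.log r₂ :=
  four_exp_separates_general h4e r₁ r₂ hr₁ hr₂ halg₁ halg₂ hirr s₂ hs₂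
end
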